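/- (Proposition 2.) Let d ≥ 1, let 𝒟 be a nonempty set of Borel probability measures on ℝ^d, let N ≥ 1, let ε ∈ ℝ, let δ > 0, and for each i ∈ [N] let a_i, b_i, a_i⁺, a_i⁻ be real numbers with a_i⁺ ≥ 0, a_i⁻ ≥ 0, a_i⁺ · a_i⁻ = 0 and a_i = a_i⁺ − a_i⁻. Suppose that for every i ∈ [N]: inf_{μ ∈ 𝒟} μ({ξ ∈ ℝ^d : (a_i⁺ + δ)·(e^T ξ) ≤ b_i}) ≥ 1 − ε/2 and inf_{μ ∈ 𝒟} μ({ξ ∈ ℝ^d : −(a_i⁻ + δ)·(e^T ξ) ≤ b_i}) ≥ 1 − ε/2. Then the distributionally robust joint chance constraint holds: inf_{μ ∈ 𝒟} μ({ξ ∈ ℝ^d : a_i·(e^T ξ) ≤ b_i for all i ∈ [N]}) ≥ 1 − ε. -/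
import Mathlib


open MeasureTheory

/-- The distributionally robust lower probability of an event `A ⊆ ℝ^d`
over a set `D` of (probability) measures: `inf_{μ ∈ D} μ(A)`. -/
noncomputable def drProb (d : ℕ) (D : Set (Measure (Fin d → ℝ)))
    (A : Set (Fin d → ℝ)) : ℝ :=
  sInf ((fun μ => (μ A).toReal) '' D)

/-- Union bound for two events under a probability measure. -/
lemma inter_toReal_bound {α : Type*} [MeasurableSpace α] (μ : Measure α)
    [IsProbabilityMeasure μ] {A B : Set α} (hA : MeasurableSet A)
    (hB : MeasurableSet B) {ε : ℝ}
    (ha : 1 - ε / 2 ≤ (μ A).toReal) (hb : 1 - ε / 2 ≤ (μ B).toReal) :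
    1 - ε ≤ (μ (A ∩ B)).toReal := by
  have hcompl : ∀ (S : Set α), MeasurableSet S →
      (μ Sᶜ).toReal = 1 - (μ S).toReal := by
    intro S hS
    rw [measure_compl hS (measure_ne_top μ S), measure_univ,
      ENNReal.toReal_sub_of_le prob_le_one ENNReal.one_ne_top, ENNReal.toReal_one]
  have hunion : (μ (Aᶜ ∪ Bᶜ)).toReal ≤ (μ Aᶜ).toReal + (μ Bᶜ).toReal := by
    have h := measure_union_le (μ := μ) Aᶜ Bᶜ
    have := ENNReal.toReal_mono (a := μ (Aᶜ ∪ Bᶜ)) (b := μ Aᶜ + μ Bᶜ)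
      (ENNReal.add_ne_top.mpr ⟨measure_ne_top μ _, measure_ne_top μ _⟩) h
    rwa [ENNReal.toReal_add (measure_ne_top μ _) (measure_ne_top μ _)] at this
  have hABc : (μ ((A ∩ B)ᶜ)).toReal ≤ ε := by
    rw [Set.compl_inter]
    have := hcompl A hA
    have := hcompl B hB
    linarith
  have := hcompl (A ∩ B) (hA.inter hB)
  have h' : (μ ((A ∩ B)ᶜ)).toReal = 1 - (μ (A ∩ B)).toReal := this
  linarith

/-- Proposition 2: the decomposed individual distributionally robust chance
constraints (25a)-(25b), each at level `1 - ε/2`, together with the sign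
decomposition (17a)-(17d) of the coefficients, imply the distributionally
robust joint chance constraint (14) at level `1 - ε`. -/
theorem prop2 (d : ℕ) (hd : 1 ≤ d)
    (D : Set (Measure (Fin d → ℝ))) (hne : D.Nonempty)
    (hprob : ∀ μ ∈ D, IsProbabilityMeasure μ)
    (N : ℕ) (hN : 1 ≤ N) (ε δ : ℝ) (hδ : 0 < δ)
    (a b aplus aminus : Fin N → ℝ)
    (hp : ∀ i, 0 ≤ aplus i) (hm : ∀ i, 0 ≤ aminus i)
    (hcomp : ∀ i, aplus i * aminus i = 0)
    (hdecomp : ∀ i, a i = aplus i - aminus i)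
    (h1 : ∀ i : Fin N,
      1 - ε / 2 ≤ drProb d D {ξ | (aplus i + δ) * (∑ j, ξ j) ≤ b i})
    (h2 : ∀ i : Fin N,
      1 - ε / 2 ≤ drProb d D {ξ | -(aminus i + δ) * (∑ j, ξ j) ≤ b i}) :
    1 - ε ≤ drProb d D {ξ | ∀ i : Fin N, a i * (∑ j, ξ j) ≤ b i} := by
  have hbdd : ∀ (A : Set (Fin d → ℝ)),
      BddBelow ((fun μ => (μ A).toReal) '' D) := by
    intro A
    exact ⟨0, by rintro x ⟨ν, -, rfl⟩; exact ENNReal.toReal_nonneg⟩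
  apply le_csInf (hne.image _)
  rintro x ⟨μ, hμ, rfl⟩
  haveI := hprob μ hμ
  -- the sum function
  set S : (Fin d → ℝ) → ℝ := fun ξ => ∑ j, ξ j with hSdef
  have hSm : Measurable S := Finset.measurable_sum _ (fun j _ => measurable_pi_apply j)
  have hNe : (Finset.univ : Finset (Fin N)).Nonempty := ⟨⟨0, hN⟩, Finset.mem_univ _⟩
  obtain ⟨i1, -, hi1⟩ := Finset.exists_min_image Finset.univ
    (fun i => b i / (aplus i + δ)) hNe
  obtain ⟨i2, -, hi2⟩ := Finset.exists_max_image Finset.univ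
    (fun i => -(b i) / (aminus i + δ)) hNe
  set A : Set (Fin d → ℝ) := {ξ | (aplus i1 + δ) * S ξ ≤ b i1} with hAdef
  set B : Set (Fin d → ℝ) := {ξ | -(aminus i2 + δ) * S ξ ≤ b i2} with hBdef
  have hAm : MeasurableSet A := measurableSet_le (hSm.const_mul _) measurable_const
  have hBm : MeasurableSet B := measurableSet_le (hSm.const_mul _) measurable_const
  have hA : 1 - ε / 2 ≤ (μ A).toReal :=
    le_trans (h1 i1) (csInf_le (hbdd _) (Set.mem_image_of_mem _ hμ))
  have hB : 1 - ε / 2 ≤ (μ B).toReal :=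
    le_trans (h2 i2) (csInf_le (hbdd _) (Set.mem_image_of_mem _ hμ))
  have hsub : A ∩ B ⊆ {ξ | ∀ i : Fin N, a i * (∑ j, ξ j) ≤ b i} := by
    rintro ξ ⟨hξA, hξB⟩ i
    have hposp : ∀ j, 0 < aplus j + δ := fun j => by have := hp j; linarith
    have hposm : ∀ j, 0 < aminus j + δ := fun j => by have := hm j; linarith
    have hup : (aplus i + δ) * S ξ ≤ b i := by
      have hs1 : S ξ ≤ b i1 / (aplus i1 + δ) :=
        (le_div_iff₀ (hposp i1)).mpr (by rw [mul_comm]; exact hξA)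
      have hs2 : S ξ ≤ b i / (aplus i + δ) :=
        hs1.trans (hi1 i (Finset.mem_univ i))
      have := (le_div_iff₀ (hposp i)).mp hs2
      linarith [this]
    have hdn : -(aminus i + δ) * S ξ ≤ b i := by
      have hs1 : -(b i2) / (aminus i2 + δ) ≤ S ξ := by
        have hξB' : -(aminus i2 + δ) * S ξ ≤ b i2 := hξB
        rw [div_le_iff₀ (hposm i2)]
        nlinarith [hξB']
      have hs2 : -(b i) / (aminus i + δ) ≤ S ξ :=
        le_trans (hi2 i (Finset.mem_univ i)) hs1
      rw [div_le_iff₀ (hposm i)] at hs2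
      nlinarith [hs2]
    have hai : a i = aplus i - aminus i := hdecomp i
    rcases le_or_gt 0 (S ξ) with hs | hs
    · have : a i * S ξ ≤ (aplus i + δ) * S ξ := by nlinarith [hm i, hδ]
      exact this.trans hup
    · have : a i * S ξ ≤ -(aminus i + δ) * S ξ := by nlinarith [hp i, hδ]
      exact this.trans hdn
  have hmono : (μ (A ∩ B)).toReal ≤ (μ {ξ | ∀ i : Fin N, a i * (∑ j, ξ j) ≤ b i}).toReal :=
    ENNReal.toReal_mono (measure_ne_top μ _) (measure_mono hsub)
  exact le_trans (inter_toReal_bound μ hAm hBm hA hB) hmono
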